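/- Let ℱ be a nonempty closed convex set of free states, 𝔉 a set of channels each of which maps ℱ into ℱ, and assume that for every σ ∈ ℱ the replacement channel τ ↦ Tr(τ)σ belongs to 𝔉. Then for every channel N, the maximum success probability of discriminating N from 𝔉 using free probe states equals p_succ(N, 𝔉, ℱ) = 1/2 + (1/2)·Ω̃₁(N) = 1/2 + (1/2)·Ω₁(N). -/

import Mathlib

open scoped Kronecker ComplexOrder

variable {ι : Type*} [Fintype ι] [DecidableEq ι]

/-- A quantum state: positive semidefinite matrix of trace one. -/
def IsState (ρ : Matrix ι ι ℂ) : Prop := ρ.PosSemidef ∧ ρ.trace = 1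

/-- The action of `id_n ⊗ N` on block matrices. -/
def idTensorMap (n : ℕ) (N : Matrix ι ι ℂ →ₗ[ℂ] Matrix ι ι ℂ)
    (M : Matrix (Fin n × ι) (Fin n × ι) ℂ) : Matrix (Fin n × ι) (Fin n × ι) ℂ :=
  Matrix.of fun p q => N (Matrix.of fun k l => M (p.1, k) (q.1, l)) p.2 q.2

/-- A quantum channel: completely positive trace preserving linear map. -/
structure Channel (ι : Type*) [Fintype ι] [DecidableEq ι] where
  map : Matrix ι ι ℂ →ₗ[ℂ] Matrix ι ι ℂ
  cp : ∀ (n : ℕ) (M : Matrix (Fin n × ι) (Fin n × ι) ℂ), M.PosSemidef →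
        (idTensorMap n map M).PosSemidef
  tp : ∀ A : Matrix ι ι ℂ, (map A).trace = A.trace

/-- The trace norm ‖A‖₁ = Tr √(AᴴA). -/
noncomputable def traceNorm (A : Matrix ι ι ℂ) : ℝ :=
  (((Matrix.posSemidef_conjTranspose_mul_self A).1.eigenvectorUnitary : Matrix ι ι ℂ) *
    Matrix.diagonal ((fun x : ℝ => (x : ℂ)) ∘ (Real.sqrt ·) ∘ (Matrix.posSemidef_conjTranspose_mul_self A).1.eigenvalues) *
    (star ((Matrix.posSemidef_conjTranspose_mul_self A).1.eigenvectorUnitary : Matrix ι ι ℂ))).trace.re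

/-- Trace-norm resource measure ω₁. -/
noncomputable def omega1 (F : Set (Matrix ι ι ℂ)) (ρ : Matrix ι ι ℂ) : ℝ :=
  (1/2) * sInf ((fun σ => traceNorm (ρ - σ)) '' F)

/-- Trace-norm resource generating power Ω₁. -/
noncomputable def genPower1 (F : Set (Matrix ι ι ℂ)) (N : Matrix ι ι ℂ → Matrix ι ι ℂ) : ℝ :=
  sSup ((fun ρ => omega1 F (N ρ)) '' F)

/-- Trace-norm resource increasing power Ω̃₁. -/
noncomputable def incPower1 (F : Set (Matrix ι ι ℂ)) (N : Matrix ι ι ℂ → Matrix ι ι ℂ) : ℝ :=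
  sSup ((fun ρ => omega1 F (N ρ) - omega1 F ρ) '' {ρ | IsState ρ})

/-- Holevo–Helstrom success probability of discriminating two channels with probe `ρ`. -/
noncomputable def psuccPair (N M : Matrix ι ι ℂ → Matrix ι ι ℂ) (ρ : Matrix ι ι ℂ) : ℝ :=
  1/2 + (1/4) * traceNorm (N ρ - M ρ)

/-- Success probability of discriminating `N` from the set of channels `Free` with probe `ρ`. -/
noncomputable def psuccChan (N : Matrix ι ι ℂ → Matrix ι ι ℂ) (Free : Set (Channel ι))
    (ρ : Matrix ι ι ℂ) : ℝ :=
  sInf ((fun M : Channel ι => psuccPair N (⇑M.map) ρ) '' Free)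

/-- Maximum success probability of discriminating `N` from `Free` using probes from `F`. -/
noncomputable def psuccFF (N : Matrix ι ι ℂ → Matrix ι ι ℂ) (Free : Set (Channel ι))
    (F : Set (Matrix ι ι ℂ)) : ℝ :=
  sSup ((fun ρ => psuccChan N Free ρ) '' F)

/-!
With a free probe `ρ`, the free channels produce exactly the free states as outputs: every output
of a free channel is free, and every free state is the output of a replacement channel. Hence the
optimal success probability with probe `ρ` is `1/2 + ω₁(N ρ)/2`, and optimizing over free probes
gives `1/2 + Ω₁(N)/2`.

For `Ω̃₁ = Ω₁`: free states have `ω₁ = 0`, giving `Ω₁ ≤ Ω̃₁`. Conversely, for a state `ρ` and a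
free `σ`, `ω₁(N ρ) ≤ ω₁(N σ) + ‖N ρ - N σ‖₁/2 ≤ Ω₁(N) + ‖ρ - σ‖₁/2`; the infimum over `σ` gives
`ω₁(N ρ) - ω₁(ρ) ≤ Ω₁(N)`. The two trace-norm facts used here, the triangle inequality and
contractivity under channels, both follow from the Jordan decomposition `C = P - Q` of a Hermitian
matrix, with `P, Q ⪰ 0` and `‖C‖₁ = Tr P + Tr Q`.
-/

section TraceNorm

open Matrix

namespace Matrix.IsHermitian

lemma trace_cfc {C : Matrix ι ι ℂ} (hC : C.IsHermitian) (f : ℝ → ℝ) :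
    (cfc f C).trace = ∑ i, ((f (hC.eigenvalues i) : ℝ) : ℂ) := by
  rw [hC.cfc_eq, IsHermitian.cfc, Unitary.conjStarAlgAut_apply, trace_mul_cycle,
    Unitary.coe_star_mul_self, one_mul, trace_diagonal]
  rfl

lemma cfc_posSemidef {C : Matrix ι ι ℂ} (hC : C.IsHermitian) {f : ℝ → ℝ} (hf : ∀ x, 0 ≤ f x) :
    (cfc f C).PosSemidef := by
  rw [hC.cfc_eq, IsHermitian.cfc, Unitary.conjStarAlgAut_apply, star_eq_conjTranspose]
  refine (posSemidef_diagonal_iff.mpr fun i => ?_).mul_mul_conjTranspose_same _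
  simpa using hf (hC.eigenvalues i)

end Matrix.IsHermitian

lemma traceNorm_eq_re_trace_cfc_sqrt (A : Matrix ι ι ℂ) :
    traceNorm A = (cfc Real.sqrt (Aᴴ * A)).trace.re := by
  rw [(posSemidef_conjTranspose_mul_self A).1.cfc_eq]
  rfl

lemma traceNorm_nonneg (A : Matrix ι ι ℂ) : 0 ≤ traceNorm A := by
  rw [traceNorm_eq_re_trace_cfc_sqrt, (posSemidef_conjTranspose_mul_self A).1.trace_cfc,
    Complex.re_sum]
  exact Finset.sum_nonneg fun i _ => Real.sqrt_nonneg _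

lemma Matrix.IsHermitian.traceNorm_eq_sum_abs_eigenvalues {C : Matrix ι ι ℂ}
    (hC : C.IsHermitian) : traceNorm C = ∑ i, |hC.eigenvalues i| := by
  have hsqrt : cfc Real.sqrt (Cᴴ * C) = cfc (fun x : ℝ => |x|) C := by
    rw [hC.eq, ← pow_two, ← cfc_comp_pow Real.sqrt 2 C]
    simp only [Real.sqrt_sq_eq_abs]
  rw [traceNorm_eq_re_trace_cfc_sqrt, hsqrt, hC.trace_cfc, Complex.re_sum]
  rfl

lemma Matrix.PosSemidef.traceNorm_eq {P : Matrix ι ι ℂ} (hP : P.PosSemidef) :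
    traceNorm P = P.trace.re := by
  rw [hP.1.traceNorm_eq_sum_abs_eigenvalues, hP.1.trace_eq_sum_eigenvalues, Complex.re_sum]
  exact Finset.sum_congr rfl fun i _ => by simp [abs_of_nonneg (hP.eigenvalues_nonneg i)]

lemma traceNorm_zero : traceNorm (0 : Matrix ι ι ℂ) = 0 := by
  simp [PosSemidef.zero.traceNorm_eq]

lemma traceNorm_sub_le_of_posSemidef {P Q : Matrix ι ι ℂ} (hP : P.PosSemidef)
    (hQ : Q.PosSemidef) : traceNorm (P - Q) ≤ P.trace.re + Q.trace.re := by
  have hC : (P - Q).IsHermitian := hP.1.sub hQ.1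
  set U : Matrix ι ι ℂ := ↑hC.eigenvectorUnitary
  have hPU : (star U * P * U).PosSemidef := by
    simpa [star_eq_conjTranspose] using hP.conjTranspose_mul_mul_same U
  have hQU : (star U * Q * U).PosSemidef := by
    simpa [star_eq_conjTranspose] using hQ.conjTranspose_mul_mul_same U
  have heig : ∀ i, (hC.eigenvalues i : ℂ) = (star U * P * U) i i - (star U * Q * U) i i := by
    intro i
    have hdiag := congrFun₂ hC.conjStarAlgAut_star_eigenvectorUnitary i i
    rw [Unitary.conjStarAlgAut_star_apply, mul_sub, sub_mul] at hdiag
    simpa using hdiag.symm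
  have htrace : ∀ R : Matrix ι ι ℂ, (star U * R * U).trace = R.trace := fun R => by
    rw [trace_mul_cycle, mem_unitaryGroup_iff.mp hC.eigenvectorUnitary.2, one_mul]
  calc traceNorm (P - Q) = ∑ i, |hC.eigenvalues i| := hC.traceNorm_eq_sum_abs_eigenvalues
    _ ≤ ∑ i, ((star U * P * U) i i).re + ∑ i, ((star U * Q * U) i i).re := by
        rw [← Finset.sum_add_distrib]
        refine Finset.sum_le_sum fun i _ => abs_le.mpr ?_
        have hi := congrArg Complex.re (heig i)
        simp only [Complex.ofReal_re, Complex.sub_re] at hi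
        have hPi := (Complex.nonneg_iff.mp (hPU.diag_nonneg (i := i))).1
        have hQi := (Complex.nonneg_iff.mp (hQU.diag_nonneg (i := i))).1
        constructor <;> linarith
    _ = P.trace.re + Q.trace.re := by
        rw [← htrace P, ← htrace Q, trace, trace, Complex.re_sum, Complex.re_sum]
        rfl

lemma Matrix.IsHermitian.exists_posSemidef_sub_eq_traceNorm {C : Matrix ι ι ℂ}
    (hC : C.IsHermitian) :
    ∃ P Q : Matrix ι ι ℂ, P.PosSemidef ∧ Q.PosSemidef ∧ C = P - Q ∧
      traceNorm C = P.trace.re + Q.trace.re := by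
  refine ⟨cfc (fun x : ℝ => max x 0) C, cfc (fun x : ℝ => max (-x) 0) C,
    hC.cfc_posSemidef fun _ => le_max_right _ _, hC.cfc_posSemidef fun _ => le_max_right _ _,
    ?_, ?_⟩
  · rw [← cfc_sub (fun x : ℝ => max x 0) (fun x : ℝ => max (-x) 0) C]
    simp only [max_zero_sub_max_neg_zero_eq_self]
    exact (cfc_id' ℝ C).symm
  · rw [hC.traceNorm_eq_sum_abs_eigenvalues, hC.trace_cfc, hC.trace_cfc, Complex.re_sum,
      Complex.re_sum, ← Finset.sum_add_distrib]
    simp only [Complex.ofReal_re, max_zero_add_max_neg_zero_eq_abs_self]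

lemma traceNorm_add_le {A B : Matrix ι ι ℂ} (hA : A.IsHermitian) (hB : B.IsHermitian) :
    traceNorm (A + B) ≤ traceNorm A + traceNorm B := by
  obtain ⟨P₁, Q₁, hP₁, hQ₁, rfl, h₁⟩ := hA.exists_posSemidef_sub_eq_traceNorm
  obtain ⟨P₂, Q₂, hP₂, hQ₂, rfl, h₂⟩ := hB.exists_posSemidef_sub_eq_traceNorm
  calc traceNorm (P₁ - Q₁ + (P₂ - Q₂)) = traceNorm ((P₁ + P₂) - (Q₁ + Q₂)) := by abel_nf
    _ ≤ (P₁ + P₂).trace.re + (Q₁ + Q₂).trace.re :=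
        traceNorm_sub_le_of_posSemidef (hP₁.add hP₂) (hQ₁.add hQ₂)
    _ = traceNorm (P₁ - Q₁) + traceNorm (P₂ - Q₂) := by
        rw [h₁, h₂, trace_add, trace_add, Complex.add_re, Complex.add_re]
        ring

namespace Channel

lemma map_posSemidef (N : Channel ι) {A : Matrix ι ι ℂ} (hA : A.PosSemidef) :
    (N.map A).PosSemidef :=
  (N.cp 1 (A.submatrix Prod.snd Prod.snd) (hA.submatrix Prod.snd)).submatrix
    (fun a : ι => ((0 : Fin 1), a))

lemma traceNorm_map_le (N : Channel ι) {A : Matrix ι ι ℂ} (hA : A.IsHermitian) :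
    traceNorm (N.map A) ≤ traceNorm A := by
  obtain ⟨P, Q, hP, hQ, rfl, hPQ⟩ := hA.exists_posSemidef_sub_eq_traceNorm
  calc traceNorm (N.map (P - Q)) = traceNorm (N.map P - N.map Q) := by rw [map_sub]
    _ ≤ (N.map P).trace.re + (N.map Q).trace.re :=
        traceNorm_sub_le_of_posSemidef (N.map_posSemidef hP) (N.map_posSemidef hQ)
    _ = traceNorm (P - Q) := by rw [N.tp, N.tp, hPQ]

lemma isState_map (N : Channel ι) {ρ : Matrix ι ι ℂ} (hρ : IsState ρ) : IsState (N.map ρ) :=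
  ⟨N.map_posSemidef hρ.1, (N.tp ρ).trans hρ.2⟩

end Channel

end TraceNorm

lemma csSup_image_const_add_mul {T : Set ℝ} (hT : T.Nonempty) (hbdd : BddAbove T) (a : ℝ)
    {c : ℝ} (hc : 0 ≤ c) : sSup ((fun x => a + c * x) '' T) = a + c * sSup T :=
  ((monotone_id.const_mul hc).const_add a |>.map_csSup_of_continuousAt (by fun_prop) hT
    hbdd).symm

lemma csInf_image_const_add_mul {T : Set ℝ} (hT : T.Nonempty) (hbdd : BddBelow T) (a : ℝ)
    {c : ℝ} (hc : 0 ≤ c) : sInf ((fun x => a + c * x) '' T) = a + c * sInf T :=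
  ((monotone_id.const_mul hc).const_add a |>.map_csInf_of_continuousAt (by fun_prop) hT
    hbdd).symm

section ResourceMeasure

variable {F : Set (Matrix ι ι ℂ)}

lemma bddBelow_traceNorm_sub_image (X : Matrix ι ι ℂ) :
    BddBelow ((fun σ => traceNorm (X - σ)) '' F) :=
  ⟨0, by rintro _ ⟨σ, -, rfl⟩; exact traceNorm_nonneg _⟩

lemma omega1_nonneg (X : Matrix ι ι ℂ) : 0 ≤ omega1 F X :=
  mul_nonneg (by norm_num) <| Real.sInf_nonneg <| by
    rintro _ ⟨σ, -, rfl⟩; exact traceNorm_nonneg _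

lemma omega1_le {σ : Matrix ι ι ℂ} (hσ : σ ∈ F) (X : Matrix ι ι ℂ) :
    omega1 F X ≤ 1/2 * traceNorm (X - σ) :=
  mul_le_mul_of_nonneg_left (csInf_le (bddBelow_traceNorm_sub_image X) ⟨σ, hσ, rfl⟩)
    (by norm_num)

lemma le_omega1 (hF : F.Nonempty) {X : Matrix ι ι ℂ} {c : ℝ}
    (h : ∀ σ ∈ F, c ≤ 1/2 * traceNorm (X - σ)) : c ≤ omega1 F X := by
  have : 2 * c ≤ sInf ((fun σ => traceNorm (X - σ)) '' F) :=
    le_csInf (hF.image _) <| by rintro _ ⟨σ, hσ, rfl⟩; linarith [h σ hσ]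
  rw [omega1]
  linarith

lemma omega1_eq_zero_of_mem {ρ : Matrix ι ι ℂ} (hρ : ρ ∈ F) : omega1 F ρ = 0 :=
  le_antisymm (by simpa [traceNorm_zero] using omega1_le hρ ρ) (omega1_nonneg ρ)

lemma omega1_le_one (hF : F.Nonempty) (hFstate : ∀ σ ∈ F, IsState σ) {X : Matrix ι ι ℂ}
    (hX : IsState X) : omega1 F X ≤ 1 := by
  obtain ⟨σ, hσ⟩ := hF
  have hσs := hFstate σ hσ
  have h := traceNorm_sub_le_of_posSemidef hX.1 hσs.1
  rw [hX.2, hσs.2, Complex.one_re] at h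
  linarith [omega1_le hσ X]

lemma omega1_le_omega1_add_traceNorm (hF : F.Nonempty)
    (hFherm : ∀ σ ∈ F, σ.IsHermitian) {X Y : Matrix ι ι ℂ} (hX : X.IsHermitian)
    (hY : Y.IsHermitian) : omega1 F X ≤ omega1 F Y + 1/2 * traceNorm (X - Y) := by
  suffices omega1 F X - 1/2 * traceNorm (X - Y) ≤ omega1 F Y by linarith
  refine le_omega1 hF fun τ hτ => ?_
  have htri : traceNorm (X - τ) ≤ traceNorm (X - Y) + traceNorm (Y - τ) := by
    simpa using traceNorm_add_le (hX.sub hY) (hY.sub (hFherm τ hτ))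
  linarith [omega1_le hτ X]

end ResourceMeasure

section GeneratingPower

variable {F : Set (Matrix ι ι ℂ)} (hF : F.Nonempty) (hFstate : ∀ σ ∈ F, IsState σ)
  (N : Channel ι)
include hF hFstate

lemma bddAbove_omega1_map_image :
    BddAbove ((fun ρ => omega1 F (N.map ρ)) '' F) :=
  ⟨1, by
    rintro _ ⟨ρ, hρ, rfl⟩
    exact omega1_le_one hF hFstate (N.isState_map (hFstate ρ hρ))⟩

lemma omega1_map_sub_le_genPower1 {ρ : Matrix ι ι ℂ} (hρ : IsState ρ) :
    omega1 F (N.map ρ) - omega1 F ρ ≤ genPower1 F N.map := by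
  suffices omega1 F (N.map ρ) - genPower1 F N.map ≤ omega1 F ρ by linarith
  refine le_omega1 hF fun σ hσ => ?_
  have hσs := hFstate σ hσ
  have hgen : omega1 F (N.map σ) ≤ genPower1 F N.map :=
    le_csSup (bddAbove_omega1_map_image hF hFstate N) ⟨σ, hσ, rfl⟩
  have hlip := omega1_le_omega1_add_traceNorm hF (fun τ hτ => (hFstate τ hτ).1.1)
    (N.map_posSemidef hρ.1).1 (N.map_posSemidef hσs.1).1
  have hcontr : traceNorm (N.map ρ - N.map σ) ≤ traceNorm (ρ - σ) := by
    simpa only [map_sub] using N.traceNorm_map_le (hρ.1.1.sub hσs.1.1)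
  linarith

lemma incPower1_eq_genPower1 : incPower1 F N.map = genPower1 F N.map := by
  have hbdd : BddAbove ((fun ρ => omega1 F (N.map ρ) - omega1 F ρ) '' {ρ | IsState ρ}) :=
    ⟨genPower1 F N.map, by
      rintro _ ⟨ρ, hρ, rfl⟩
      exact omega1_map_sub_le_genPower1 hF hFstate N hρ⟩
  have hstates : {ρ : Matrix ι ι ℂ | IsState ρ}.Nonempty :=
    let ⟨σ, hσ⟩ := hF; ⟨σ, hFstate σ hσ⟩
  refine le_antisymm (csSup_le (hstates.image _) ?_) (csSup_le (hF.image _) ?_)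
  · rintro _ ⟨ρ, hρ, rfl⟩
    exact omega1_map_sub_le_genPower1 hF hFstate N hρ
  · rintro _ ⟨ρ, hρ, rfl⟩
    have h : omega1 F (N.map ρ) - omega1 F ρ ≤ incPower1 F N.map :=
      le_csSup hbdd ⟨ρ, hFstate ρ hρ, rfl⟩
    rwa [omega1_eq_zero_of_mem hρ, sub_zero] at h

end GeneratingPower

section Discrimination

variable {F : Set (Matrix ι ι ℂ)} {Free : Set (Channel ι)}
  (hFree : ∀ M ∈ Free, ∀ ρ ∈ F, M.map ρ ∈ F)
  (hRepl : ∀ σ ∈ F, ∃ M ∈ Free, ∀ τ : Matrix ι ι ℂ, M.map τ = τ.trace • σ)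
include hFree hRepl

lemma psuccChan_eq_omega1 (N : Matrix ι ι ℂ → Matrix ι ι ℂ) {ρ : Matrix ι ι ℂ} (hρ : ρ ∈ F)
    (hρ1 : ρ.trace = 1) : psuccChan N Free ρ = 1/2 + 1/2 * omega1 F (N ρ) := by
  have himage : (fun M : Channel ι => psuccPair N M.map ρ) '' Free
      = (fun x => 1/2 + 1/4 * x) '' ((fun σ => traceNorm (N ρ - σ)) '' F) := by
    rw [Set.image_image]
    refine Set.Subset.antisymm ?_ ?_
    · rintro _ ⟨M, hM, rfl⟩
      exact ⟨M.map ρ, hFree M hM ρ hρ, rfl⟩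
    · rintro _ ⟨σ, hσ, rfl⟩
      obtain ⟨M, hM, hMσ⟩ := hRepl σ hσ
      exact ⟨M, hM, by simp [psuccPair, hMσ ρ, hρ1]⟩
  rw [psuccChan, himage, csInf_image_const_add_mul ((Set.nonempty_of_mem hρ).image _)
    (bddBelow_traceNorm_sub_image _) _ (by norm_num), omega1]
  ring

lemma psuccFF_eq_genPower1 (hF : F.Nonempty) (hFstate : ∀ σ ∈ F, IsState σ) (N : Channel ι) :
    psuccFF N.map Free F = 1/2 + 1/2 * genPower1 F N.map := by
  have himage : (fun ρ => psuccChan N.map Free ρ) '' F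
      = (fun x => 1/2 + 1/2 * x) '' ((fun ρ => omega1 F (N.map ρ)) '' F) := by
    rw [Set.image_image]
    exact Set.image_congr fun ρ hρ =>
      psuccChan_eq_omega1 hFree hRepl N.map hρ (hFstate ρ hρ).2
  rw [psuccFF, himage, csSup_image_const_add_mul (hF.image _)
    (bddAbove_omega1_map_image hF hFstate N) _ (by norm_num), genPower1]

end Discrimination

theorem stmt2_general
    (F : Set (Matrix ι ι ℂ)) (hFne : F.Nonempty) (hFstate : ∀ ρ ∈ F, IsState ρ)
    (Free : Set (Channel ι))
    (hFree : ∀ M ∈ Free, ∀ ρ ∈ F, M.map ρ ∈ F)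
    (hRepl : ∀ σ ∈ F, ∃ M ∈ Free, ∀ τ : Matrix ι ι ℂ, M.map τ = τ.trace • σ)
    (N : Channel ι) :
    psuccFF (⇑N.map) Free F = 1/2 + (1/2) * incPower1 F (⇑N.map) ∧
    psuccFF (⇑N.map) Free F = 1/2 + (1/2) * genPower1 F (⇑N.map) := by
  have h := psuccFF_eq_genPower1 hFree hRepl hFne hFstate N
  exact ⟨by rw [h, incPower1_eq_genPower1 hFne hFstate N], h⟩

/-- the maximum success probability of discriminating `N` from the free channels
using free probe states is `1/2 + Ω̃₁(N)/2 = 1/2 + Ω₁(N)/2`. -/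
theorem stmt2
    (F : Set (Matrix ι ι ℂ)) (hFne : F.Nonempty) (hFstate : ∀ ρ ∈ F, IsState ρ)
    (hFconv : Convex ℝ F) (hFclosed : IsClosed F)
    (Free : Set (Channel ι))
    (hFree : ∀ M ∈ Free, ∀ ρ ∈ F, M.map ρ ∈ F)
    (hRepl : ∀ σ ∈ F, ∃ M ∈ Free, ∀ τ : Matrix ι ι ℂ, M.map τ = τ.trace • σ)
    (N : Channel ι) :
    psuccFF (⇑N.map) Free F = 1/2 + (1/2) * incPower1 F (⇑N.map) ∧
    psuccFF (⇑N.map) Free F = 1/2 + (1/2) * genPower1 F (⇑N.map) :=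
  stmt2_general F hFne hFstate Free hFree hRepl N
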